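/- arXiv:1001.0834 — 6 statements merged into one kernel-verified Lean document; each statement's English description precedes it below -/
import Mathlib

section
/- Let $X_n$ be nonempty sets, $\psi_n : X_n^2 \to [0,\infty)$, and suppose the sum-like relation $E$ is an equivalence relation. Fix $c > 0$ and assume the failure of condition $(\ell 1)$: for all $x,y \in \prod_n X_n$, if $\psi_n(x(n),y(n)) < c$ for all but finitely many $n$ then $\sum_n \psi_n(x(n),y(n)) < \infty$. Then the set of indices $n$ for which there exist $u,v \in X_n$ with $\psi_n(u,v) < c$ but $\psi_n(v,u) \geq c$ is finite. -/
theorem stmt_4 (X : ℕ → Type*) [∀ n, Nonempty (X n)]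
    (ψ : ∀ n, X n → X n → ℝ) (hψ : ∀ n u v, 0 ≤ ψ n u v)
    (hE : Equivalence (fun x y : ∀ n, X n => Summable (fun n => ψ n (x n) (y n))))
    (c : ℝ) (hc : 0 < c)
    (hℓ1fail : ∀ x y : ∀ n, X n,
      (∃ m, ∀ n > m, ψ n (x n) (y n) < c) → Summable (fun n => ψ n (x n) (y n))) :
    {n : ℕ | ∃ u v : X n, ψ n u v < c ∧ c ≤ ψ n v u}.Finite := by
  classical
  by_contra hfin
  set S := {n : ℕ | ∃ u v : X n, ψ n u v < c ∧ c ≤ ψ n v u} with hS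
  have hch : ∀ n, ∃ p : X n × X n, n ∈ S → ψ n p.1 p.2 < c ∧ c ≤ ψ n p.2 p.1 := by
    intro n
    by_cases h : n ∈ S
    · obtain ⟨u, v, h1, h2⟩ := h
      exact ⟨⟨u, v⟩, fun _ => ⟨h1, h2⟩⟩
    · exact ⟨⟨Classical.arbitrary _, Classical.arbitrary _⟩, fun h' => absurd h' h⟩
  choose p hp using hch
  set x : ∀ n, X n := fun n => (p n).1 with hx
  set y : ∀ n, X n := fun n => if n ∈ S then (p n).2 else (p n).1 with hy
  -- reflexivity: ψ n (x n) (x n) summable, hence tends to 0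
  have hrefl : Summable (fun n => ψ n (x n) (x n)) := hE.refl x
  have h0 : Filter.Tendsto (fun n => ψ n (x n) (x n)) Filter.atTop (nhds 0) :=
    hrefl.tendsto_atTop_zero
  obtain ⟨m, hm⟩ := (h0.eventually (gt_mem_nhds hc)).exists_forall_of_atTop
  have hxy : Summable (fun n => ψ n (x n) (y n)) := by
    apply hℓ1fail
    refine ⟨m, fun n hn => ?_⟩
    by_cases h : n ∈ S
    · simpa [hy, h] using (hp n h).1
    · simpa [hy, h] using hm n hn.le
  have hyx : Summable (fun n => ψ n (y n) (x n)) := hE.symm hxy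
  have h0' : Filter.Tendsto (fun n => ψ n (y n) (x n)) Filter.atTop (nhds 0) :=
    hyx.tendsto_atTop_zero
  obtain ⟨m', hm'⟩ := (h0'.eventually (gt_mem_nhds hc)).exists_forall_of_atTop
  have hSinf : S.Infinite := hfin
  obtain ⟨n, hnS, hnm⟩ := hSinf.exists_gt m'
  have := hm' n hnm.le
  have hge : c ≤ ψ n (y n) (x n) := by simpa [hy, hnS] using (hp n hnS).2
  linarith
end

section
/- Let $X_n$ be nonempty sets, $\psi_n : X_n^2 \to [0,\infty)$, and suppose the sum-like relation $E$ is an equivalence relation. Fix $c > 0$ and assume: for all $x,y \in \prod_n X_n$, if $\psi_n(x(n),y(n)) < c$ for all but finitely many $n$ then $\sum_n \psi_n(x(n),y(n)) < \infty$. Then there exists $N_0$ such that for all $n > N_0$, the relation $F_n = \{(u,v) \in X_n^2 : \psi_n(u,v) < c\}$ is an equivalence relation on $X_n$ (reflexive, symmetric, and transitive). -/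
theorem stmt_5 (X : ℕ → Type*) [∀ n, Nonempty (X n)]
    (ψ : ∀ n, X n → X n → ℝ) (hψ : ∀ n u v, 0 ≤ ψ n u v)
    (hE : Equivalence (fun x y : ∀ n, X n => Summable (fun n => ψ n (x n) (y n))))
    (c : ℝ) (hc : 0 < c)
    (hℓ1fail : ∀ x y : ∀ n, X n,
      (∃ m, ∀ n > m, ψ n (x n) (y n) < c) → Summable (fun n => ψ n (x n) (y n))) :
    ∃ N₀ : ℕ, ∀ n > N₀,
      (∀ u : X n, ψ n u u < c) ∧
      (∀ u v : X n, ψ n u v < c → ψ n v u < c) ∧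
      (∀ u v r : X n, ψ n u v < c → ψ n v r < c → ψ n u r < c) := by
  classical
  -- Step 1: reflexivity eventually
  obtain ⟨N₁, hN₁⟩ : ∃ N₁ : ℕ, ∀ n ≥ N₁, ∀ u : X n, ψ n u u < c := by
    set x : ∀ n, X n := fun n =>
      if h : ∃ u : X n, c ≤ ψ n u u then h.choose else Classical.arbitrary _ with hxdef
    have hsum : Summable (fun n => ψ n (x n) (x n)) := hE.refl x
    have hev : ∀ᶠ n in Filter.atTop, ψ n (x n) (x n) < c :=
      hsum.tendsto_atTop_zero.eventually_lt_const hc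
    obtain ⟨N₁, hN₁⟩ := Filter.eventually_atTop.1 hev
    refine ⟨N₁, fun n hn u => ?_⟩
    by_contra h
    push_neg at h
    have hx : ∃ u : X n, c ≤ ψ n u u := ⟨u, h⟩
    have h1 := hN₁ n hn
    rw [show x n = hx.choose from dif_pos hx] at h1
    exact absurd h1 (not_lt.2 hx.choose_spec)
  -- Step 2: symmetry eventually
  obtain ⟨N₂, hN₂⟩ : ∃ N₂ : ℕ, ∀ n ≥ N₂, ∀ u v : X n, ψ n u v < c → ψ n v u < c := by
    set P : ∀ n, (X n × X n) → Prop := fun n p => ψ n p.1 p.2 < c ∧ c ≤ ψ n p.2 p.1 with hP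
    set x : ∀ n, X n := fun n =>
      if h : ∃ p, P n p then h.choose.1 else Classical.arbitrary _ with hxdef
    set y : ∀ n, X n := fun n =>
      if h : ∃ p, P n p then h.choose.2 else Classical.arbitrary _ with hydef
    have hsum : Summable (fun n => ψ n (x n) (y n)) := by
      refine hℓ1fail x y ⟨N₁, fun n hn => ?_⟩
      by_cases h : ∃ p, P n p
      · simpa only [hxdef, hydef, dif_pos h] using h.choose_spec.1
      · simp only [hxdef, hydef, dif_neg h]
        exact hN₁ n hn.le _
    have hsum' : Summable (fun n => ψ n (y n) (x n)) := hE.symm hsum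
    have hev : ∀ᶠ n in Filter.atTop, ψ n (y n) (x n) < c :=
      hsum'.tendsto_atTop_zero.eventually_lt_const hc
    obtain ⟨N₂, hN₂⟩ := Filter.eventually_atTop.1 hev
    refine ⟨N₂, fun n hn u v huv => ?_⟩
    by_contra h
    push_neg at h
    have hx : ∃ p, P n p := ⟨(u, v), huv, h⟩
    have h1 := hN₂ n hn
    rw [show y n = hx.choose.2 from dif_pos hx, show x n = hx.choose.1 from dif_pos hx] at h1
    exact absurd h1 (not_lt.2 hx.choose_spec.2)
  -- Step 3: transitivity eventually
  obtain ⟨N₃, hN₃⟩ : ∃ N₃ : ℕ, ∀ n ≥ N₃,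
      ∀ u v r : X n, ψ n u v < c → ψ n v r < c → ψ n u r < c := by
    set P : ∀ n, (X n × X n × X n) → Prop := fun n p =>
      ψ n p.1 p.2.1 < c ∧ ψ n p.2.1 p.2.2 < c ∧ c ≤ ψ n p.1 p.2.2 with hP
    set x : ∀ n, X n := fun n =>
      if h : ∃ p, P n p then h.choose.1 else Classical.arbitrary _ with hxdef
    set y : ∀ n, X n := fun n =>
      if h : ∃ p, P n p then h.choose.2.1 else Classical.arbitrary _ with hydef
    set z : ∀ n, X n := fun n =>
      if h : ∃ p, P n p then h.choose.2.2 else Classical.arbitrary _ with hzdef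
    have hsum1 : Summable (fun n => ψ n (x n) (y n)) := by
      refine hℓ1fail x y ⟨N₁, fun n hn => ?_⟩
      by_cases h : ∃ p, P n p
      · simpa only [hxdef, hydef, dif_pos h] using h.choose_spec.1
      · simp only [hxdef, hydef, dif_neg h]
        exact hN₁ n hn.le _
    have hsum2 : Summable (fun n => ψ n (y n) (z n)) := by
      refine hℓ1fail y z ⟨N₁, fun n hn => ?_⟩
      by_cases h : ∃ p, P n p
      · simpa only [hydef, hzdef, dif_pos h] using h.choose_spec.2.1
      · simp only [hydef, hzdef, dif_neg h]
        exact hN₁ n hn.le _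
    have hsum3 : Summable (fun n => ψ n (x n) (z n)) := hE.trans hsum1 hsum2
    have hev : ∀ᶠ n in Filter.atTop, ψ n (x n) (z n) < c :=
      hsum3.tendsto_atTop_zero.eventually_lt_const hc
    obtain ⟨N₃, hN₃⟩ := Filter.eventually_atTop.1 hev
    refine ⟨N₃, fun n hn u v r huv hvr => ?_⟩
    by_contra h
    push_neg at h
    have hx : ∃ p, P n p := ⟨(u, v, r), huv, hvr, h⟩
    have h1 := hN₃ n hn
    rw [show x n = hx.choose.1 from dif_pos hx, show z n = hx.choose.2.2 from dif_pos hx] at h1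
    exact absurd h1 (not_lt.2 hx.choose_spec.2.2)
  exact ⟨max N₁ (max N₂ N₃), fun n hn =>
    ⟨hN₁ n (le_of_lt (lt_of_le_of_lt (le_max_left _ _) hn)),
     hN₂ n (le_of_lt (lt_of_le_of_lt (le_trans (le_max_left _ _) (le_max_right _ _)) hn)),
     hN₃ n (le_of_lt (lt_of_le_of_lt (le_trans (le_max_right _ _) (le_max_right _ _)) hn))⟩⟩
end

section
/- Let $X = \bigcup_n X_n$, $\psi : X^2 \to [0,1]$, $\psi_n = \psi \restriction X_n^2$, and assume condition $(m2)$: for all $u,v,r \in X$, if $u,v,r \in X_n$ then there is $m > n$ with $u,v,r \in X_m$ (in particular every element of $X$ lies in infinitely many $X_n$). If the sum-like relation $E((X_n,\psi_n)_n)$ on $\prod_n X_n$ (summability of $n \mapsto \psi(x(n),y(n))$) is an equivalence relation, then $\psi(u,u) = 0$ for every $u \in X$. -/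
theorem stmt_7 (X : Type*) (Xs : ℕ → Set X) (hne : ∀ n, (Xs n).Nonempty)
    (hcover : ∀ u : X, ∃ n, u ∈ Xs n)
    (ψ : X → X → ℝ) (hψ0 : ∀ u v, 0 ≤ ψ u v) (hψ1 : ∀ u v, ψ u v ≤ 1)
    (hm2 : ∀ u v r : X, ∀ n, u ∈ Xs n → v ∈ Xs n → r ∈ Xs n →
      ∃ m > n, u ∈ Xs m ∧ v ∈ Xs m ∧ r ∈ Xs m)
    (hE : Equivalence (fun x y : ∀ n, Xs n => Summable (fun n => ψ (x n) (y n)))) :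
    ∀ u : X, ψ u u = 0 := by
  intro u
  by_contra hc
  have hcpos : 0 < ψ u u := lt_of_le_of_ne (hψ0 u u) (Ne.symm hc)
  -- the set of indices containing u is infinite (frequently)
  have hfreq : ∃ᶠ n in Filter.atTop, u ∈ Xs n := by
    rw [Filter.frequently_atTop]
    intro a
    obtain ⟨n0, hn0⟩ := hcover u
    -- iterate hm2 to get beyond a
    have : ∀ k : ℕ, ∃ n, k ≤ n ∧ u ∈ Xs n := by
      intro k
      induction k with
      | zero => exact ⟨n0, Nat.zero_le _, hn0⟩
      | succ k ih =>
        obtain ⟨n, hkn, hn⟩ := ih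
        obtain ⟨m, hm, hum, _, _⟩ := hm2 u u u n hn hn hn
        exact ⟨m, Nat.succ_le_of_lt (lt_of_le_of_lt hkn hm), hum⟩
    obtain ⟨n, hkn, hn⟩ := this a
    exact ⟨n, hkn, hn⟩
  -- build x n = u when possible
  classical
  set x : ∀ n, Xs n := fun n => if h : u ∈ Xs n then ⟨u, h⟩ else ⟨(hne n).some, (hne n).some_mem⟩ with hx
  have hsum : Summable (fun n => ψ ((x n : X)) (x n)) := hE.refl x
  have htend := hsum.tendsto_atTop_zero
  have hev : ∀ᶠ n in Filter.atTop, ψ ((x n : X)) (x n) < ψ u u := by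
    have := htend.eventually (gt_mem_nhds hcpos)
    exact this
  have := (hfreq.and_eventually hev).exists
  obtain ⟨n, hn, hlt⟩ := this
  have hxn : (x n : X) = u := by simp [hx, hn]
  rw [hxn] at hlt
  exact lt_irrefl _ hlt
end

section
/- Let $X = \bigcup_n X_n$, $\psi : X^2 \to [0,1]$, $\psi_n = \psi \restriction X_n^2$, and assume: for all $u,v,r \in X$, if $u,v,r \in X_n$ then there is $m > n$ with $u,v,r \in X_m$. If the sum-like relation $E((X_n,\psi_n)_n)$ is an equivalence relation, then there exists $C \geq 1$ such that for all $u,v$ lying together in some $X_n$: $\psi(v,u) \leq C\,\psi(u,v)$. -/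
/-!
Suppose no constant `C` works. Then for every `k` there is a pair `(u, v)` lying together in some
`X_n` with `2 ^ k * ψ(u, v) < ψ(v, u)`. Repeating the `k`-th pair about `1 / ψ(v, u)` times makes
the `ψ(v, u)`-terms contribute at least `1` per block while the `ψ(u, v)`-terms contribute at most
`2 ^ (1 - k)`. Since every pair lies together in infinitely many `X_m`, the repeated pairs can be
placed at distinct coordinates of two points `x, y` of `∏ X_n` that agree elsewhere; reflexivity of
`E` controls the remaining coordinates, so `x E y`, while `y E x` fails, contradicting symmetry.
-/

open Filter Function

lemma frequently_atTop_of_exists_gt {P : ℕ → Prop} {n : ℕ} (hn : P n)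
    (h : ∀ n, P n → ∃ m > n, P m) : ∃ᶠ m in atTop, P m := by
  rw [frequently_atTop]
  intro a
  induction a with
  | zero => exact ⟨n, n.zero_le, hn⟩
  | succ a ih =>
    obtain ⟨b, hab, hb⟩ := ih
    obtain ⟨m, hbm, hm⟩ := h b hb
    exact ⟨m, by omega, hm⟩

-- `c` takes each value `k` exactly `N k` times.
lemma exists_comp_summable_iff_summable_mul (N : ℕ → ℕ) (hN : ∀ k, N k ≠ 0) :
    ∃ c : ℕ → ℕ, ∀ f : ℕ → ℝ, (∀ k, 0 ≤ f k) →
      (Summable (f ∘ c) ↔ Summable fun k => (N k : ℝ) * f k) := by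
  have : Infinite (Σ k, Fin (N k)) :=
    Infinite.of_injective (fun k => ⟨k, ⟨0, Nat.pos_of_ne_zero (hN k)⟩⟩)
      fun a b h => congrArg Sigma.fst h
  obtain ⟨e⟩ : Nonempty (ℕ ≃ Σ k, Fin (N k)) := nonempty_equiv_of_countable
  refine ⟨fun j => (e j).1, fun f hf => ?_⟩
  rw [show f ∘ (fun j => (e j).1) = (fun i : Σ k, Fin (N k) => f i.1) ∘ e from rfl,
    e.summable_iff, summable_sigma_of_nonneg fun i => hf i.1]
  simp only [Summable.of_finite, implies_true, true_and, tsum_fintype, Finset.sum_const,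
    Finset.card_univ, Fintype.card_fin, nsmul_eq_mul]

lemma exists_comp_summable_and_not_summable {p q : ℕ → ℝ} (hp : ∀ k, 0 ≤ p k)
    (hq0 : ∀ k, 0 < q k) (hq1 : ∀ k, q k ≤ 1) (hpq : ∀ k, 2 ^ k * p k ≤ q k) :
    ∃ c : ℕ → ℕ, Summable (p ∘ c) ∧ ¬Summable (q ∘ c) := by
  set N : ℕ → ℕ := fun k => ⌈(q k)⁻¹⌉₊
  have hN : ∀ k, N k ≠ 0 := fun k => (Nat.ceil_pos.2 (inv_pos.2 (hq0 k))).ne'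
  obtain ⟨c, hc⟩ := exists_comp_summable_iff_summable_mul N hN
  refine ⟨c, (hc p hp).2 ?_, fun hsum => ?_⟩
  · refine (summable_geometric_two.mul_left 2).of_nonneg_of_le
      (fun k => mul_nonneg (Nat.cast_nonneg _) (hp k)) fun k => ?_
    have hN_le : (N k : ℝ) ≤ 2 * (q k)⁻¹ := by
      have := Nat.ceil_lt_add_one (inv_pos.2 (hq0 k)).le
      have := (one_le_inv₀ (hq0 k)).2 (hq1 k)
      linarith
    have hp_le : p k ≤ (1 / 2) ^ k * q k := by
      rw [one_div, inv_pow, ← div_eq_inv_mul, le_div_iff₀ (by positivity), mul_comm]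
      exact hpq k
    calc (N k : ℝ) * p k ≤ 2 * (q k)⁻¹ * ((1 / 2) ^ k * q k) :=
          mul_le_mul hN_le hp_le (hp k) (by positivity [hq0 k])
      _ = 2 * (1 / 2) ^ k := by field_simp [(hq0 k).ne']
  · obtain ⟨k, hk⟩ := (((hc q fun k => (hq0 k).le).1 hsum).tendsto_atTop_zero.eventually
      (gt_mem_nhds one_pos)).exists
    have : (1 : ℝ) ≤ N k * q k := by
      rw [← inv_mul_cancel₀ (hq0 k).ne']
      exact mul_le_mul_of_nonneg_right (Nat.le_ceil _) (hq0 k).le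
    linarith

section SumLike

variable {X : Type*} {Xs : ℕ → Set X}

lemma extend_mem {φ : ℕ → ℕ} (hφ : Injective φ) {u : ℕ → X} (hu : ∀ j, u j ∈ Xs (φ j))
    {a : ℕ → X} (ha : ∀ n, a n ∈ Xs n) (n : ℕ) : extend φ u a n ∈ Xs n := by
  by_cases h : ∃ j, φ j = n
  · obtain ⟨j, rfl⟩ := h
    rw [hφ.extend_apply]
    exact hu j
  · rw [extend_apply' _ _ _ h]
    exact ha n

theorem summable_swap_of_frequently_mem (hne : ∀ n, (Xs n).Nonempty) {ψ : X → X → ℝ}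
    (hrefl : ∀ x : ∀ n, Xs n, Summable fun n => ψ (x n) (x n))
    (hsymm : ∀ x y : ∀ n, Xs n, Summable (fun n => ψ (x n) (y n)) →
      Summable fun n => ψ (y n) (x n))
    {u v : ℕ → X} (huv : ∀ j, ∃ᶠ m in atTop, u j ∈ Xs m ∧ v j ∈ Xs m)
    (hsum : Summable fun j => ψ (u j) (v j)) : Summable fun j => ψ (v j) (u j) := by
  obtain ⟨φ, hφ, hφuv⟩ := extraction_forall_of_frequently huv
  choose a ha using hne
  let x : ∀ n, Xs n := fun n => ⟨extend φ u a n, extend_mem hφ.injective (fun j => (hφuv j).1) ha n⟩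
  let y : ∀ n, Xs n := fun n => ⟨extend φ v a n, extend_mem hφ.injective (fun j => (hφuv j).2) ha n⟩
  have hx (j : ℕ) : (x (φ j) : X) = u j := hφ.injective.extend_apply _ _ _
  have hy (j : ℕ) : (y (φ j) : X) = v j := hφ.injective.extend_apply _ _ _
  -- `x` and `y` agree off the range of `φ`, where reflexivity takes over.
  have hdiff : Summable fun n => ψ (x n) (y n) - ψ (x n) (x n) := by
    refine (hφ.injective.summable_iff fun n hn => ?_).1 ?_
    · simp only [x, y, extend_apply' _ _ _ hn, sub_self]
    · simpa only [comp_def, hx, hy] using hsum.sub ((hrefl x).comp_injective hφ.injective)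
  have hxy : Summable fun n => ψ (x n) (y n) := by simpa using hdiff.add (hrefl x)
  simpa only [comp_def, hx, hy] using (hsymm x y hxy).comp_injective hφ.injective

end SumLike

theorem stmt_8_general (X : Type*) (Xs : ℕ → Set X) (hne : ∀ n, (Xs n).Nonempty)
    (ψ : X → X → ℝ) (hψ0 : ∀ u v, 0 ≤ ψ u v) (hψ1 : ∀ u v, ψ u v ≤ 1)
    (hm2 : ∀ u v r : X, ∀ n, u ∈ Xs n → v ∈ Xs n → r ∈ Xs n →
      ∃ m > n, u ∈ Xs m ∧ v ∈ Xs m ∧ r ∈ Xs m)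
    (hE : Equivalence (fun x y : ∀ n, Xs n => Summable (fun n => ψ (x n) (y n)))) :
    ∃ C : ℝ, 1 ≤ C ∧ ∀ u v : X, (∃ n, u ∈ Xs n ∧ v ∈ Xs n) → ψ v u ≤ C * ψ u v := by
  by_contra! hcon
  choose u v huv hlt using fun k : ℕ => hcon (2 ^ k) (one_le_pow₀ one_le_two)
  obtain ⟨c, hp, hq⟩ := exists_comp_summable_and_not_summable (fun k => hψ0 (u k) (v k))
    (fun k => (mul_nonneg (by positivity) (hψ0 _ _)).trans_lt (hlt k)) (fun k => hψ1 _ _)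
    fun k => (hlt k).le
  refine hq (summable_swap_of_frequently_mem hne hE.refl (fun _ _ => hE.symm) (fun j => ?_) hp)
  obtain ⟨n, hun, hvn⟩ := huv (c j)
  exact frequently_atTop_of_exists_gt ⟨hun, hvn⟩ fun m ⟨hum, hvm⟩ =>
    (hm2 _ _ _ m hum hvm hum).imp fun _ ⟨hm, hu, hv, _⟩ => ⟨hm, hu, hv⟩

theorem stmt_8 (X : Type*) (Xs : ℕ → Set X) (hne : ∀ n, (Xs n).Nonempty)
    (hcover : ∀ u : X, ∃ n, u ∈ Xs n)
    (ψ : X → X → ℝ) (hψ0 : ∀ u v, 0 ≤ ψ u v) (hψ1 : ∀ u v, ψ u v ≤ 1)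
    (hm2 : ∀ u v r : X, ∀ n, u ∈ Xs n → v ∈ Xs n → r ∈ Xs n →
      ∃ m > n, u ∈ Xs m ∧ v ∈ Xs m ∧ r ∈ Xs m)
    (hE : Equivalence (fun x y : ∀ n, Xs n => Summable (fun n => ψ (x n) (y n)))) :
    ∃ C : ℝ, 1 ≤ C ∧ ∀ u v : X, (∃ n, u ∈ Xs n ∧ v ∈ Xs n) → ψ v u ≤ C * ψ u v :=
  stmt_8_general X Xs hne ψ hψ0 hψ1 hm2 hE
end

section
/- Let $X$ be a set, $\psi : X^2 \to [0,1]$ with $\psi(u,u)=0$ for all $u$, and suppose there is $C \geq 1$ such that $\psi(v,u) \leq C\psi(u,v)$ and $\psi(u,r) \leq C(\psi(u,v)+\psi(v,r))$ for all $u,v,r$. Then there exist a pseudometric $d$ on $X$, a real $p \geq 1$, and a constant $K \geq 1$ such that for all $u,v \in X$: $K^{-1} d(u,v)^p \leq \psi(u,v) \leq K\, d(u,v)^p$ whenever $\psi(u,v) > 0$, and $d(u,v) = 0$ iff $\psi(u,v) = 0$. Consequently, for all $x,y \in X^{\mathbb{N}}$, $\sum_n \psi(x(n),y(n)) < \infty$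 iff $\sum_n d(x(n),y(n))^p < \infty$. -/
private lemma rpow_max_aux {a b ε : ℝ} (ha : 0 ≤ a) (hb : 0 ≤ b) (hε : 0 ≤ ε) :
    max a b ^ ε = max (a ^ ε) (b ^ ε) := by
  rcases le_total a b with h | h
  · rw [max_eq_right h, max_eq_right (Real.rpow_le_rpow ha h hε)]
  · rw [max_eq_left h, max_eq_left (Real.rpow_le_rpow hb h hε)]

theorem stmt_13 (X : Type*) (ψ : X → X → ℝ)
    (hψ0 : ∀ u v, 0 ≤ ψ u v) (hψ1 : ∀ u v, ψ u v ≤ 1)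
    (hrefl : ∀ u : X, ψ u u = 0)
    (C : ℝ) (hC : 1 ≤ C)
    (hsymm : ∀ u v : X, ψ v u ≤ C * ψ u v)
    (htri : ∀ u v r : X, ψ u r ≤ C * (ψ u v + ψ v r)) :
    ∃ (d : X → X → ℝ) (p K : ℝ),
      (∀ u v r : X, 0 ≤ d u v ∧ d u u = 0 ∧ d u v = d v u ∧ d u r ≤ d u v + d v r) ∧
      1 ≤ p ∧ 1 ≤ K ∧
      (∀ u v : X,
        (0 < ψ u v → K⁻¹ * d u v ^ p ≤ ψ u v ∧ ψ u v ≤ K * d u v ^ p) ∧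
        (d u v = 0 ↔ ψ u v = 0)) ∧
      (∀ x y : ℕ → X,
        Summable (fun n => ψ (x n) (y n)) ↔ Summable (fun n => d (x n) (y n) ^ p)) := by
  set φ : X → X → ℝ := fun u v => max (ψ u v) (ψ v u) with hφ
  have hφ0 : ∀ u v, 0 ≤ φ u v := fun u v => le_max_of_le_left (hψ0 u v)
  have hφsymm : ∀ u v, φ u v = φ v u := fun u v => max_comm _ _
  have hφself : ∀ u, φ u u = 0 := fun u => by simp [hφ, hrefl u]
  have hψφ : ∀ u v, ψ u v ≤ φ u v := fun u v => le_max_left _ _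
  have hφψ : ∀ u v, φ u v ≤ C * ψ u v := fun u v => by
    apply max_le _ (hsymm u v)
    nlinarith [hψ0 u v]
  -- quasi-triangle for φ with constant C^2
  have hC0 : (0:ℝ) ≤ C := by linarith
  have hφtri : ∀ u v r, φ u r ≤ C ^ 2 * (φ u v + φ v r) := by
    intro u v r
    have hs : 0 ≤ φ u v + φ v r := add_nonneg (hφ0 u v) (hφ0 v r)
    have hCC : C * (φ u v + φ v r) ≤ C ^ 2 * (φ u v + φ v r) := by
      nlinarith [mul_nonneg (mul_nonneg hC0 (by linarith : (0:ℝ) ≤ C - 1)) hs]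
    apply max_le
    · calc ψ u r ≤ C * (ψ u v + ψ v r) := htri u v r
        _ ≤ C * (φ u v + φ v r) :=
            mul_le_mul_of_nonneg_left (add_le_add (hψφ u v) (hψφ v r)) hC0
        _ ≤ C ^ 2 * (φ u v + φ v r) := hCC
    · calc ψ r u ≤ C * (ψ r v + ψ v u) := htri r v u
        _ ≤ C * (C * ψ v r + C * ψ u v) :=
            mul_le_mul_of_nonneg_left (add_le_add (hsymm v r) (hsymm u v)) hC0
        _ = C ^ 2 * (ψ u v + ψ v r) := by ring
        _ ≤ C ^ 2 * (φ u v + φ v r) :=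
            mul_le_mul_of_nonneg_left (add_le_add (hψφ u v) (hψφ v r)) (by positivity)
  set B : ℝ := 2 * C ^ 4 + C ^ 2 with hB
  have hB2 : 2 ≤ B := by nlinarith [sq_nonneg (C - 1), sq_nonneg (C ^ 2 - 1), sq_nonneg C]
  have hBpos : 0 < B := by linarith
  have hBne1 : B ≠ 1 := by linarith
  set ε : ℝ := Real.logb B 2 with hε
  have hε0 : 0 < ε := Real.logb_pos (by linarith) one_lt_two
  have hε1 : ε ≤ 1 := by
    rw [hε, Real.logb, div_le_one (Real.log_pos (by linarith))]
    exact Real.log_le_log two_pos hB2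
  have hBε : B ^ ε = 2 := Real.rpow_logb hBpos hBne1 two_pos
  set p : ℝ := ε⁻¹ with hp
  have hp1 : 1 ≤ p := (one_le_inv_iff₀).2 ⟨hε0, hε1⟩
  have hp0 : 0 < p := lt_of_lt_of_le one_pos hp1
  have hεp : ε * p = 1 := mul_inv_cancel₀ (ne_of_gt hε0)
  -- the pre-nndist
  set g : X → X → NNReal := fun u v => ((φ u v) ^ ε).toNNReal with hg
  have hgcoe : ∀ u v, (g u v : ℝ) = (φ u v) ^ ε := fun u v =>
    Real.coe_toNNReal _ (Real.rpow_nonneg (hφ0 u v) ε)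
  have hgself : ∀ u, g u u = 0 := fun u => by
    simp [hg, hφself u, Real.zero_rpow (ne_of_gt hε0)]
  have hgsymm : ∀ u v, g u v = g v u := fun u v => by simp [hg, hφsymm u v]
  have hg4 : ∀ x₁ x₂ x₃ x₄, g x₁ x₄ ≤ 2 * max (g x₁ x₂) (max (g x₂ x₃) (g x₃ x₄)) := by
    intro x₁ x₂ x₃ x₄
    rw [← NNReal.coe_le_coe]
    push_cast
    rw [hgcoe, hgcoe, hgcoe, hgcoe]
    set M : ℝ := max (φ x₁ x₂) (max (φ x₂ x₃) (φ x₃ x₄)) with hM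
    have hM0 : 0 ≤ M := le_trans (hφ0 x₁ x₂) (le_max_left _ _)
    have h14 : φ x₁ x₄ ≤ B * M := by
      have e1 : φ x₁ x₂ ≤ M := le_max_left _ _
      have e2 : φ x₂ x₃ ≤ M := le_trans (le_max_left _ _) (le_max_right _ _)
      have e3 : φ x₃ x₄ ≤ M := le_trans (le_max_right _ _) (le_max_right _ _)
      have h24 : φ x₂ x₄ ≤ C ^ 2 * (2 * M) := by
        calc φ x₂ x₄ ≤ C ^ 2 * (φ x₂ x₃ + φ x₃ x₄) := hφtri x₂ x₃ x₄
          _ ≤ C ^ 2 * (2 * M) :=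
              mul_le_mul_of_nonneg_left (by linarith) (by positivity)
      calc φ x₁ x₄ ≤ C ^ 2 * (φ x₁ x₂ + φ x₂ x₄) := hφtri x₁ x₂ x₄
        _ ≤ C ^ 2 * (M + C ^ 2 * (2 * M)) :=
            mul_le_mul_of_nonneg_left (by linarith) (by positivity)
        _ = B * M := by rw [hB]; ring
    calc φ x₁ x₄ ^ ε ≤ (B * M) ^ ε := Real.rpow_le_rpow (hφ0 _ _) h14 hε0.le
      _ = B ^ ε * M ^ ε := Real.mul_rpow hBpos.le hM0
      _ = 2 * M ^ ε := by rw [hBε]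
      _ = 2 * max (φ x₁ x₂ ^ ε) (max (φ x₂ x₃ ^ ε) (φ x₃ x₄ ^ ε)) := by
          rw [hM, rpow_max_aux (hφ0 _ _) (le_trans (hφ0 x₂ x₃) (le_max_left _ _)) hε0.le,
            rpow_max_aux (hφ0 _ _) (hφ0 _ _) hε0.le]
  letI I : PseudoMetricSpace X := PseudoMetricSpace.ofPreNNDist g hgself hgsymm
  have hdg : ∀ u v : X, dist u v ≤ (φ u v) ^ ε := fun u v => by
    have := PseudoMetricSpace.dist_ofPreNNDist_le g hgself hgsymm u v
    rwa [hgcoe] at this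
  have hgd : ∀ u v : X, (φ u v) ^ ε ≤ 2 * dist u v := fun u v => by
    have := PseudoMetricSpace.le_two_mul_dist_ofPreNNDist g hgself hgsymm hg4 u v
    rwa [hgcoe] at this
  set K : ℝ := C * 2 ^ p with hK
  have h2p1 : (1 : ℝ) ≤ 2 ^ p := Real.one_le_rpow one_le_two hp0.le
  have hK1 : 1 ≤ K := one_le_mul_of_one_le_of_one_le hC h2p1
  -- key pointwise bounds
  have key1 : ∀ u v : X, dist u v ^ p ≤ C * ψ u v := fun u v => by
    calc dist u v ^ p ≤ ((φ u v) ^ ε) ^ p :=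
          Real.rpow_le_rpow dist_nonneg (hdg u v) hp0.le
      _ = φ u v := by rw [← Real.rpow_mul (hφ0 u v), hεp, Real.rpow_one]
      _ ≤ C * ψ u v := hφψ u v
  have key2 : ∀ u v : X, ψ u v ≤ 2 ^ p * dist u v ^ p := fun u v => by
    calc ψ u v ≤ φ u v := hψφ u v
      _ = ((φ u v) ^ ε) ^ p := by rw [← Real.rpow_mul (hφ0 u v), hεp, Real.rpow_one]
      _ ≤ (2 * dist u v) ^ p :=
          Real.rpow_le_rpow (Real.rpow_nonneg (hφ0 u v) ε) (hgd u v) hp0.le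
      _ = 2 ^ p * dist u v ^ p := Real.mul_rpow (by norm_num) dist_nonneg
  refine ⟨dist, p, K, fun u v r => ⟨dist_nonneg, dist_self u, dist_comm u v, dist_triangle u v r⟩,
    hp1, hK1, fun u v => ⟨fun _ => ⟨?_, ?_⟩, ?_⟩, fun x y => ⟨fun h => ?_, fun h => ?_⟩⟩
  · -- K⁻¹ * dist^p ≤ ψ
    rw [inv_mul_le_iff₀ (by linarith : (0:ℝ) < K)]
    calc dist u v ^ p ≤ C * ψ u v := key1 u v
      _ ≤ K * ψ u v := by
        apply mul_le_mul_of_nonneg_right _ (hψ0 u v)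
        nlinarith
  · -- ψ ≤ K * dist^p
    calc ψ u v ≤ 2 ^ p * dist u v ^ p := key2 u v
      _ ≤ K * dist u v ^ p := by
        apply mul_le_mul_of_nonneg_right _ (Real.rpow_nonneg dist_nonneg p)
        nlinarith
  · constructor
    · intro h0
      have := key2 u v
      rw [h0, Real.zero_rpow (ne_of_gt hp0), mul_zero] at this
      exact le_antisymm this (hψ0 u v)
    · intro h0
      have hvu : ψ v u = 0 := le_antisymm (by have h := hsymm u v; rw [h0, mul_zero] at h; exact h) (hψ0 v u)
      have hφuv : φ u v = 0 := by simp [hφ, h0, hvu]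
      have h1 : dist u v ≤ 0 := by
        have := hdg u v
        rwa [hφuv, Real.zero_rpow (ne_of_gt hε0)] at this
      exact le_antisymm h1 dist_nonneg
  · -- Summable ψ → Summable dist^p
    exact Summable.of_nonneg_of_le (fun n => Real.rpow_nonneg dist_nonneg p)
      (fun n => key1 _ _) (h.mul_left C)
  · -- Summable dist^p → Summable ψ
    exact Summable.of_nonneg_of_le (fun n => hψ0 _ _)
      (fun n => le_trans (key2 _ _) (le_refl _)) (h.mul_left (2 ^ p))
end

section
/- Define $\theta' : \mathbb{R}^{\mathbb{N}} \to [0,1]^{\mathbb{N} \times \mathbb{Z}}$ by $\theta'(z)(m,k) = 0$ if $z(m) < k$, $\theta'(z)(m,k) = z(m)-k$ if $k \leq z(m) < k+1$, and $\theta'(z)(m,k) = 1$ if $k+1 \leq z(m)$. Then for all $z, w \in \mathbb{R}^{\mathbb{N}}$: the family $(m,k) \mapsto |\theta'(z)(m,k) - \theta'(w)(m,k)|$ is summable if and only if the family $m \mapsto |z(m)-w(m)|$ is summable. Hence $\theta'$ is a reduction of the $\ell_1$-equivalence on $\mathbb{R}^{\mathbb{N}}$ to the $\ell_1$-equivalence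 on $[0,1]^{\mathbb{N} \times \mathbb{Z}}$. -/
/-!
Writing `θ'(z)(m, k) = max 0 (min 1 (z m - k))`, the family of distances splits into fibres over
`m`. On each fibre the truncations `t ↦ max 0 (min 1 (t - k))` are monotone and equal
`min t (k + 1) - min t k`, so for `s ≤ t` the differences telescope and sum to `t - s`. Hence the
`m`-th fibre sums to `|z m - w m|`, and a nonnegative family on `ℕ × ℤ` is summable iff its
fibres are and their sums are summable.
-/

open Finset

theorem Int.sum_Ico_sub {M : Type*} [AddCommGroup M] (f : ℤ → M) {a b : ℤ} (hab : a ≤ b) :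
    ∑ k ∈ Ico a b, (f (k + 1) - f k) = f b - f a := by
  induction b, hab using Int.leInduction with
  | base => simp
  | succ n hn ih =>
    rw [← Finset.insert_Ico_right_eq_Ico_add_one hn, sum_insert (by simp), ih]
    abel

noncomputable def unitClamp (t : ℝ) (k : ℤ) : ℝ := max 0 (min 1 (t - k))

lemma unitClamp_of_le {t : ℝ} {k : ℤ} (h : t ≤ k) : unitClamp t k = 0 := by
  simp only [unitClamp]
  rw [min_eq_right (by linarith), max_eq_left (by linarith)]

lemma unitClamp_of_add_one_le {t : ℝ} {k : ℤ} (h : k + 1 ≤ t) : unitClamp t k = 1 := by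
  simp only [unitClamp]
  rw [min_eq_left (by linarith), max_eq_right zero_le_one]

lemma unitClamp_of_le_of_le {t : ℝ} {k : ℤ} (h₀ : k ≤ t) (h₁ : t ≤ k + 1) :
    unitClamp t k = t - k := by
  simp only [unitClamp]
  rw [min_eq_right (by linarith), max_eq_right (by linarith)]

lemma unitClamp_eq_min_sub_min (t : ℝ) (k : ℤ) : unitClamp t k = min t (k + 1) - min t k := by
  rcases le_total t k with h | h
  · rw [unitClamp_of_le h, min_eq_left h, min_eq_left (by linarith), sub_self]
  rcases le_total t (k + 1) with h' | h'
  · rw [unitClamp_of_le_of_le h h', min_eq_left h', min_eq_right h]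
  · rw [unitClamp_of_add_one_le h', min_eq_right h', min_eq_right h]
    ring

lemma unitClamp_mono (k : ℤ) : Monotone (unitClamp · k) := fun _ _ h =>
  max_le_max le_rfl (min_le_min le_rfl (sub_le_sub_right h _))

lemma sum_Ico_unitClamp {t : ℝ} {a b : ℤ} (ha : a ≤ t) (hb : t ≤ b) :
    ∑ k ∈ Ico a b, unitClamp t k = t - a := by
  have hab : a ≤ b := by exact_mod_cast ha.trans hb
  have htele := Int.sum_Ico_sub (fun k : ℤ => min t (k : ℝ)) hab
  push_cast at htele
  simp only [unitClamp_eq_min_sub_min, htele, min_eq_left hb, min_eq_right ha]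

lemma hasSum_unitClamp_sub {s t : ℝ} (h : s ≤ t) :
    HasSum (fun k => unitClamp t k - unitClamp s k) (t - s) := by
  have hs : (⌊s⌋ : ℝ) ≤ s := Int.floor_le s
  have ht : t ≤ ⌈t⌉ := Int.le_ceil t
  have hsupp : ∀ k ∉ Ico ⌊s⌋ ⌈t⌉, unitClamp t k - unitClamp s k = 0 := by
    intro k hk
    rcases not_and_or.1 (mem_Ico.not.1 hk) with hk | hk
    · have : (k : ℝ) + 1 ≤ s :=
        le_trans (by exact_mod_cast Int.add_one_le_of_lt (not_le.1 hk)) hs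
      rw [unitClamp_of_add_one_le this, unitClamp_of_add_one_le (this.trans h), sub_self]
    · have : t ≤ k := ht.trans (by exact_mod_cast not_lt.1 hk)
      rw [unitClamp_of_le this, unitClamp_of_le (h.trans this), sub_self]
  have hsum : HasSum (fun k => unitClamp t k - unitClamp s k) _ :=
    hasSum_sum_of_ne_finset_zero hsupp
  rwa [sum_sub_distrib, sum_Ico_unitClamp (hs.trans h) ht, sum_Ico_unitClamp hs (h.trans ht),
    sub_sub_sub_cancel_right] at hsum

lemma hasSum_abs_unitClamp_sub (s t : ℝ) :
    HasSum (fun k => |unitClamp t k - unitClamp s k|) |t - s| := by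
  wlog h : s ≤ t generalizing s t
  · simpa only [abs_sub_comm] using this t s (le_of_not_ge h)
  rw [abs_of_nonneg (sub_nonneg.2 h)]
  exact (hasSum_unitClamp_sub h).congr_fun fun k =>
    abs_of_nonneg (sub_nonneg.2 (unitClamp_mono k h))

lemma eq_unitClamp {t v : ℝ} {k : ℤ} (h₀ : t < k → v = 0) (h₁ : k ≤ t → t < k + 1 → v = t - k)
    (h₂ : k + 1 ≤ t → v = 1) : v = unitClamp t k := by
  rcases lt_or_ge t k with h | h
  · rw [h₀ h, unitClamp_of_le h.le]
  rcases lt_or_ge t (k + 1) with h' | h'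
  · rw [h₁ h h', unitClamp_of_le_of_le h h'.le]
  · rw [h₂ h', unitClamp_of_add_one_le h']

theorem stmt_17 (θ' : (ℕ → ℝ) → ℕ × ℤ → ℝ)
    (h1 : ∀ (z : ℕ → ℝ) (m : ℕ) (k : ℤ), z m < k → θ' z (m, k) = 0)
    (h2 : ∀ (z : ℕ → ℝ) (m : ℕ) (k : ℤ), (k : ℝ) ≤ z m → z m < k + 1 →
      θ' z (m, k) = z m - k)
    (h3 : ∀ (z : ℕ → ℝ) (m : ℕ) (k : ℤ), (k : ℝ) + 1 ≤ z m → θ' z (m, k) = 1) :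
    ∀ z w : ℕ → ℝ,
      Summable (fun q : ℕ × ℤ => |θ' z q - θ' w q|) ↔
        Summable (fun m => |z m - w m|) := by
  intro z w
  have hθ : ∀ z q, θ' z q = unitClamp (z q.1) q.2 := fun z ⟨m, k⟩ =>
    eq_unitClamp (h1 z m k) (h2 z m k) (h3 z m k)
  have hfiber (m : ℕ) := hasSum_abs_unitClamp_sub (w m) (z m)
  simp only [hθ]
  rw [summable_prod_of_nonneg fun _ => abs_nonneg _]
  simp only [fun m => (hfiber m).tsum_eq]
  exact ⟨And.right, fun h => ⟨fun m => (hfiber m).summable, h⟩⟩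
end
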